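/- If R is an integral domain that is not a field, then every nonempty basic open set σ_k in the Macías topology is infinite. -/
import Mathlib


def sigmaSet {R : Type*} [CommRing R] (k : R) : Set R :=
  {s | ∃ u v : R, u * k + v * s = 1}

/-- In an integral domain that is not a field, every (nonempty) basic open set
σ_k ∖ {0} of the Macías topology on R∖{0} is infinite. -/
theorem sigma_infinite (R : Type*) [CommRing R] [IsDomain R] (hf : ¬ IsField R)
    (k : R) (hk : k ≠ 0) (hne : (sigmaSet k \ {0} : Set R).Nonempty) :
    (sigmaSet k \ {0} : Set R).Infinite := by
  have hinf : Infinite R := by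
    rw [← not_finite_iff_infinite]
    intro h
    exact hf (Finite.isField_of_domain R)
  have h1 : (sigmaSet k : Set R).Infinite := by
    apply Set.infinite_of_injective_forall_mem (f := fun r : R => 1 + r * k)
    · intro a b hab
      simp only at hab
      have : (a - b) * k = 0 := by ring_nf; linear_combination hab
      rcases mul_eq_zero.mp this with h | h
      · exact sub_eq_zero.mp h
      · exact absurd h hk
    · intro r
      exact ⟨-r, 1, by ring⟩
  exact h1.diff (Set.finite_singleton 0)
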